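/- Let σ_i, σ_j > 0, λ ∈ [0,1], and ρ ∈ [-1,1]. Then σ_naive² = λ²σ_i² + (1-λ)²σ_j² + 2λ(1-λ)ρσ_iσ_j ≥ (1+ρ)/2 · (λσ_i + (1-λ)σ_j)². In particular σ_naive ≥ sqrt((1+ρ)/2) · σ_ours. -/
import Mathlib

/-- Quantitative lower bound on the naive mixup variance:
σ_naive² ≥ (1+ρ)/2 · σ_ours², hence σ_naive ≥ sqrt((1+ρ)/2) · σ_ours. -/
theorem naive_mixup_variance_lower_bound (σi σj ρ t : ℝ)
    (hi : 0 < σi) (hj : 0 < σj)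
    (ht : t ∈ Set.Icc (0 : ℝ) 1) (hρ : ρ ∈ Set.Icc (-1 : ℝ) 1) :
    (1 + ρ) / 2 * (t * σi + (1 - t) * σj) ^ 2
      ≤ t ^ 2 * σi ^ 2 + (1 - t) ^ 2 * σj ^ 2 + 2 * t * (1 - t) * ρ * σi * σj ∧
    Real.sqrt ((1 + ρ) / 2) * (t * σi + (1 - t) * σj)
      ≤ Real.sqrt (t ^ 2 * σi ^ 2 + (1 - t) ^ 2 * σj ^ 2
          + 2 * t * (1 - t) * ρ * σi * σj) := by
  obtain ⟨ht0, ht1⟩ := ht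
  obtain ⟨hρ0, hρ1⟩ := hρ
  have key : (1 + ρ) / 2 * (t * σi + (1 - t) * σj) ^ 2
      ≤ t ^ 2 * σi ^ 2 + (1 - t) ^ 2 * σj ^ 2 + 2 * t * (1 - t) * ρ * σi * σj := by
    nlinarith [sq_nonneg (t * σi - (1 - t) * σj), sq_nonneg (t * σi + (1 - t) * σj)]
  refine ⟨key, ?_⟩
  have hX : 0 ≤ t * σi + (1 - t) * σj := by nlinarith
  have h1 : Real.sqrt ((1 + ρ) / 2) * (t * σi + (1 - t) * σj)
      = Real.sqrt ((1 + ρ) / 2 * (t * σi + (1 - t) * σj) ^ 2) := by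
    rw [Real.sqrt_mul (by linarith), Real.sqrt_sq hX]
  rw [h1]
  exact Real.sqrt_le_sqrt key
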